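/- arXiv:1207.3398 — 3 statements merged into one kernel-verified Lean document; each statement's English description precedes it below -/
import Mathlib

section
/- Let n ≥ 3. There exists κ₀ > 0, depending only on n, such that for every δ ∈ ℝ^{n−2} with 0 < |δ| < κ₀ and all indices 1 ≤ i, j ≤ n−2: if δᵢ > δⱼ then C_i(δ) < C_j(δ). -/
open MeasureTheory Metric Filter Set

noncomputable section

/-- `ℝⁿ` with the Euclidean structure. -/
abbrev E (n : ℕ) := EuclideanSpace ℝ (Fin n)

/-- The Laplacian of `f : ℝⁿ → ℝ` at `x`, as the sum of the (iterated) second partial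
derivatives in the coordinate directions. -/
def lap (n : ℕ) (f : E n → ℝ) (x : E n) : ℝ :=
  ∑ i : Fin n, fderiv ℝ (fun y => fderiv ℝ f y (EuclideanSpace.single i 1)) x
    (EuclideanSpace.single i 1)

/-- `u` is a solution of the unstable obstacle problem `Δu = -χ_{u>0}` in the unit ball `B₁`,
in the sense of distributions. -/
def IsUnstableSolution (n : ℕ) (u : E n → ℝ) : Prop :=
  ContinuousOn u (ball (0 : E n) 1) ∧
  ∀ φ : E n → ℝ, ContDiff ℝ (⊤ : ℕ∞) φ → HasCompactSupport φ → tsupport φ ⊆ ball (0 : E n) 1 →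
    ∫ x in ball (0 : E n) 1, u x * lap n φ x
      = - ∫ x in {x ∈ ball (0 : E n) 1 | 0 < u x}, φ x

/-- The `L²` norm of `f` over the unit ball `B₁`. -/
def L2B (n : ℕ) (f : E n → ℝ) : ℝ :=
  (∫ x in ball (0 : E n) 1, (f x) ^ 2) ^ (1/2 : ℝ)

/-- The polynomial `p_δ(x) = Σ_{i=1}^{n-2} δᵢ xᵢ² + (1 − δ̃) x_{n-1}² − x_n²`,
where `δ̃ = Σ δᵢ` (0-indexed: the last two coordinates are `n-2` and `n-1`). -/
def pdelta (n : ℕ) (hn : 3 ≤ n) (δ : EuclideanSpace ℝ (Fin (n - 2))) (x : E n) : ℝ :=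
  (∑ i : Fin (n - 2), δ i * (x ⟨(i : ℕ), lt_of_lt_of_le i.isLt (Nat.sub_le n 2)⟩) ^ 2)
    + (1 - ∑ i : Fin (n - 2), δ i) * (x ⟨n - 2, by omega⟩) ^ 2
    - (x ⟨n - 1, by omega⟩) ^ 2

/-- The surface measure `σ` on the unit sphere `S^{n-1} ⊆ ℝⁿ`. -/
def sphMeasure (n : ℕ) : Measure (sphere (0 : E n) 1) :=
  (volume : Measure (E n)).toSphere

/-- `B_i(δ) = -∫_{S^{n-1}} χ_{{p_δ > 0}} x_i² dσ`. -/
def Bfun (n : ℕ) (hn : 3 ≤ n) (δ : EuclideanSpace ℝ (Fin (n - 2))) (i : Fin n) : ℝ :=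
  - ∫ x : sphere (0 : E n) 1,
      (if 0 < pdelta n hn δ (x : E n) then ((x : E n) i) ^ 2 else 0) ∂(sphMeasure n)

/-- `B(δ) = -∫_{S^{n-1}} χ_{{p_δ > 0}} dσ`. -/
def BfunTot (n : ℕ) (hn : 3 ≤ n) (δ : EuclideanSpace ℝ (Fin (n - 2))) : ℝ :=
  - ∫ x : sphere (0 : E n) 1,
      (if 0 < pdelta n hn δ (x : E n) then (1 : ℝ) else 0) ∂(sphMeasure n)

/-- `C_i(δ) = B_i(δ) - B_i(0)`. -/
def Cfun (n : ℕ) (hn : 3 ≤ n) (δ : EuclideanSpace ℝ (Fin (n - 2))) (i : Fin n) : ℝ :=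
  Bfun n hn δ i - Bfun n hn 0 i


/-! ### Auxiliary material for the proof of `statement7` -/

section Statement7Aux

open Pointwise

open scoped ENNReal NNReal

instance sphMeasure.isFiniteMeasure (n : ℕ) : IsFiniteMeasure (sphMeasure n) := by
  unfold sphMeasure; infer_instance

variable {n : ℕ}

def sphFun (T : E n ≃ₗᵢ[ℝ] E n) (x : sphere (0 : E n) 1) : sphere (0 : E n) 1 :=
  ⟨T x, by
    rw [mem_sphere_zero_iff_norm, T.norm_map]
    exact mem_sphere_zero_iff_norm.1 x.2⟩

/-- The homeomorphism of the unit sphere induced by a linear isometry. -/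
def sphMap (T : E n ≃ₗᵢ[ℝ] E n) : sphere (0 : E n) 1 ≃ₜ sphere (0 : E n) 1 where
  toEquiv :=
    { toFun := sphFun T
      invFun := sphFun T.symm
      left_inv := fun x => by ext : 1; simp [sphFun]
      right_inv := fun x => by ext : 1; simp [sphFun] }
  continuous_toFun := (T.continuous.comp continuous_subtype_val).subtype_mk _
  continuous_invFun := (T.symm.continuous.comp continuous_subtype_val).subtype_mk _

open Set in
lemma smul_image_comm (T : E n ≃ₗᵢ[ℝ] E n) (A : Set (E n)) :
    Set.Ioo (0:ℝ) 1 • (⇑T '' A) = ⇑T '' (Set.Ioo (0:ℝ) 1 • A) := by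
  ext y
  constructor
  · rintro ⟨r, hr, a, ⟨b, hb, rfl⟩, rfl⟩
    exact ⟨r • b, ⟨r, hr, b, hb, rfl⟩, by simp⟩
  · rintro ⟨z, ⟨r, hr, b, hb, rfl⟩, rfl⟩
    exact ⟨r, hr, T b, ⟨b, hb, rfl⟩, by simp⟩

open Set in
lemma sphMap_measurePreserving (T : E n ≃ₗᵢ[ℝ] E n) :
    MeasurePreserving (sphMap T) (sphMeasure n) (sphMeasure n) := by
  refine ⟨(sphMap T).continuous.measurable, ?_⟩
  refine Measure.ext fun s hs => ?_
  rw [Measure.map_apply (sphMap T).continuous.measurable hs]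
  unfold sphMeasure
  rw [Measure.toSphere_apply' _ hs, Measure.toSphere_apply' _ ((sphMap T).measurable hs)]
  have him : ((↑) '' ((sphMap T) ⁻¹' s) : Set (E n)) = ⇑T.symm '' ((↑) '' s) := by
    rw [← Homeomorph.image_symm, image_image, image_image]
    rfl
  rw [him, smul_image_comm T.symm]
  congr 1
  have hpre : ⇑T.symm '' (Ioo (0:ℝ) 1 • ((↑) '' s : Set (E n)))
      = ⇑T ⁻¹' (Ioo (0:ℝ) 1 • ((↑) '' s : Set (E n))) := by
    ext y
    simp only [mem_image, mem_preimage]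
    constructor
    · rintro ⟨x, hx, rfl⟩; simpa using hx
    · intro h; exact ⟨T y, h, by simp⟩
  rw [hpre]
  have hmp : MeasurePreserving (T.toHomeomorph.toMeasurableEquiv : E n ≃ᵐ E n)
      volume volume := T.measurePreserving
  exact hmp.measure_preimage_equiv _

open Set in
/-- Open nonempty subsets of the sphere have positive `sphMeasure`. -/
lemma sphMeasure_pos (hn : 3 ≤ n) {u : Set (sphere (0 : E n) 1)} (hu : IsOpen u)
    (hne : u.Nonempty) : 0 < sphMeasure n u := by
  obtain ⟨W, hW, rfl⟩ := isOpen_induced_iff.1 hu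
  rw [sphMeasure, Measure.toSphere_apply' _ hu.measurableSet]
  set f : E n → E n := fun y => (‖y‖⁻¹ : ℝ) • y with hf
  have hO : IsOpen {y : E n | 0 < ‖y‖ ∧ ‖y‖ < 1} := by
    have : {y : E n | 0 < ‖y‖ ∧ ‖y‖ < 1} = (fun y : E n => ‖y‖) ⁻¹' (Ioo 0 1) := rfl
    rw [this]; exact isOpen_Ioo.preimage continuous_norm
  have hcont : ContinuousOn f {y : E n | 0 < ‖y‖ ∧ ‖y‖ < 1} := by
    apply ContinuousOn.smul (f := fun y : E n => ‖y‖⁻¹) (g := id) _ continuousOn_id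
    exact (continuous_norm.continuousOn).inv₀ fun y hy => ne_of_gt hy.1
  have hV : IsOpen ({y : E n | 0 < ‖y‖ ∧ ‖y‖ < 1} ∩ f ⁻¹' W) :=
    hcont.isOpen_inter_preimage hO hW
  set V := {y : E n | 0 < ‖y‖ ∧ ‖y‖ < 1} ∩ f ⁻¹' W with hVdef
  have hsub : V ⊆ Ioo (0:ℝ) 1 • ((↑) '' ((↑) ⁻¹' W : Set (sphere (0:E n) 1)) : Set (E n)) := by
    rintro y ⟨⟨hy0, hy1⟩, hyW⟩
    refine ⟨‖y‖, ⟨hy0, hy1⟩, f y, ⟨⟨f y, ?_⟩, hyW, rfl⟩, ?_⟩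
    · rw [mem_sphere_zero_iff_norm, hf]
      simp only [norm_smul, norm_inv, norm_norm]
      field_simp
    · rw [hf]; simp only [smul_smul]
      rw [mul_inv_cancel₀ (ne_of_gt hy0), one_smul]
  obtain ⟨x₀, hx₀⟩ := hne
  have h1 : ‖(x₀ : E n)‖ = 1 := mem_sphere_zero_iff_norm.1 x₀.2
  have hVne : V.Nonempty := by
    refine ⟨(2⁻¹ : ℝ) • (x₀ : E n), ⟨?_, ?_⟩, ?_⟩
    · simp [norm_smul, h1]
    · rw [norm_smul, h1]; norm_num
    · have : f ((2⁻¹ : ℝ) • (x₀ : E n)) = (x₀ : E n) := by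
        rw [hf]
        simp only [norm_smul, h1, norm_inv, Real.norm_ofNat, smul_smul]
        norm_num
      simpa [this] using hx₀
  have hvol : 0 < (volume : Measure (E n)) V := hV.measure_pos (volume : Measure (E n)) hVne
  have hmono := measure_mono (μ := (volume : Measure (E n))) hsub
  have hd1 : (1:ℝ≥0∞) ≤ (Module.finrank ℝ (E n) : ℝ≥0∞) := by
    rw [Nat.one_le_cast, finrank_euclideanSpace, Fintype.card_fin]; omega
  calc (0:ℝ≥0∞) < (volume : Measure (E n)) V := hvol
    _ ≤ (volume : Measure (E n))
          (Ioo (0:ℝ) 1 • ((↑) '' ((↑) ⁻¹' W : Set (sphere (0:E n) 1)) : Set (E n))) := hmono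
    _ ≤ _ := le_mul_of_one_le_left (zero_le) hd1

/-- Change of variables for sphere integrals under a linear isometry. -/
lemma integral_sphMap (T : E n ≃ₗᵢ[ℝ] E n) (f : E n → ℝ) :
    ∫ x : sphere (0:E n) 1, f (T x) ∂(sphMeasure n)
      = ∫ x : sphere (0:E n) 1, f x ∂(sphMeasure n) :=
  (sphMap_measurePreserving T).integral_comp (sphMap T).measurableEmbedding
    (fun x : sphere (0:E n) 1 => f (x : E n))

/-- The embedding `Fin (n-2) → Fin n`. -/
abbrev emb (n : ℕ) (k : Fin (n - 2)) : Fin n :=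
  ⟨(k : ℕ), lt_of_lt_of_le k.isLt (Nat.sub_le n 2)⟩

lemma emb_inj {k l : Fin (n-2)} : emb n k = emb n l ↔ k = l := by
  constructor
  · intro h; exact Fin.ext (by simpa [emb] using congrArg Fin.val h)
  · rintro rfl; rfl

/-- The isometry of `ℝⁿ` swapping coordinates `i` and `j` (indices in `Fin (n-2)`). -/
def swapT (i j : Fin (n - 2)) : E n ≃ₗᵢ[ℝ] E n :=
  LinearIsometryEquiv.piLpCongrLeft 2 ℝ ℝ (Equiv.swap (emb n i) (emb n j))

lemma swapT_apply (i j : Fin (n-2)) (v : E n) (k : Fin n) :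
    swapT i j v k = v (Equiv.swap (emb n i) (emb n j) k) := by
  simp [swapT, LinearIsometryEquiv.piLpCongrLeft_apply, Equiv.piCongrLeft'_apply]

lemma swap_emb (i j k : Fin (n-2)) :
    Equiv.swap (emb n i) (emb n j) (emb n k) = emb n (Equiv.swap i j k) := by
  rcases eq_or_ne k i with rfl | hki
  · simp
  · rcases eq_or_ne k j with rfl | hkj
    · simp
    · rw [Equiv.swap_apply_of_ne_of_ne (fun h => hki (emb_inj.1 h)) (fun h => hkj (emb_inj.1 h)),
        Equiv.swap_apply_of_ne_of_ne hki hkj]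

lemma swap_high (i j : Fin (n-2)) (m : ℕ) (hm2 : n - 2 ≤ m) (hm : m < n) :
    Equiv.swap (emb n i) (emb n j) ⟨m, hm⟩ = ⟨m, hm⟩ := by
  apply Equiv.swap_apply_of_ne_of_ne <;>
    · apply Fin.ne_of_val_ne
      simp only [emb]
      have := i.isLt
      have := j.isLt
      omega

/-- `δ` with entries `i`, `j` swapped. -/
def swapδ (δ : EuclideanSpace ℝ (Fin (n-2))) (i j : Fin (n-2)) : EuclideanSpace ℝ (Fin (n-2)) :=
  WithLp.toLp 2 (fun k => δ (Equiv.swap i j k))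

lemma swapδ_swapδ (δ : EuclideanSpace ℝ (Fin (n-2))) (i j : Fin (n-2)) :
    swapδ (swapδ δ i j) i j = δ := by
  ext k
  simp only [swapδ]
  rw [Equiv.swap_apply_self]

lemma swapδ_zero (i j : Fin (n-2)) : swapδ (0 : EuclideanSpace ℝ (Fin (n-2))) i j = 0 := by
  ext k
  rfl

lemma pdelta_swapT (hn : 3 ≤ n) (δ : EuclideanSpace ℝ (Fin (n-2))) (i j : Fin (n-2)) (v : E n) :
    pdelta n hn δ (swapT i j v) = pdelta n hn (swapδ δ i j) v := by
  unfold pdelta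
  have hsum : ∑ k : Fin (n-2), swapδ δ i j k = ∑ k, δ k := by
    rw [show (fun k => swapδ δ i j k) = (fun k => δ (Equiv.swap i j k)) from rfl]
    exact Equiv.sum_comp (Equiv.swap i j) δ
  have hc : ∀ k : Fin (n-2), swapT i j v (emb n k) = v (emb n (Equiv.swap i j k)) := by
    intro k; rw [swapT_apply, swap_emb]
  have h2 : swapT i j v ⟨n-2, by omega⟩ = v ⟨n-2, by omega⟩ := by
    rw [swapT_apply, swap_high i j (n-2) le_rfl (by omega)]
  have h3 : swapT i j v ⟨n-1, by omega⟩ = v ⟨n-1, by omega⟩ := by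
    rw [swapT_apply, swap_high i j (n-1) (by omega) (by omega)]
  rw [hsum] at *
  rw [h2, h3]
  congr 1
  congr 1
  calc ∑ k : Fin (n-2), δ k * (swapT i j v (emb n k))^2
      = ∑ k : Fin (n-2), δ k * (v (emb n (Equiv.swap i j k)))^2 :=
        Finset.sum_congr rfl fun k _ => by rw [hc]
    _ = ∑ k : Fin (n-2), swapδ δ i j k * (v (emb n k))^2 := by
        rw [← Equiv.sum_comp (Equiv.swap i j) (fun k => swapδ δ i j k * (v (emb n k))^2)]
        refine Finset.sum_congr rfl fun k _ => ?_
        simp only [swapδ]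
        rw [Equiv.swap_apply_self]

lemma pdelta_sub (hn : 3 ≤ n) (δ : EuclideanSpace ℝ (Fin (n-2))) {i j : Fin (n-2)} (hij : i ≠ j)
    (x : E n) :
    pdelta n hn δ x - pdelta n hn (swapδ δ i j) x
      = (δ i - δ j) * ((x (emb n i))^2 - (x (emb n j))^2) := by
  have hsum : ∑ k : Fin (n-2), swapδ δ i j k = ∑ k, δ k := by
    rw [show (fun k => swapδ δ i j k) = (fun k => δ (Equiv.swap i j k)) from rfl]
    exact Equiv.sum_comp (Equiv.swap i j) δ
  have key : ∑ k : Fin (n-2), (δ k - swapδ δ i j k) * (x (emb n k))^2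
      = (δ i - δ j) * ((x (emb n i))^2 - (x (emb n j))^2) := by
    rw [← Finset.sum_subset (Finset.subset_univ ({i, j} : Finset (Fin (n-2))))]
    · rw [Finset.sum_pair hij]
      simp only [swapδ]
      rw [Equiv.swap_apply_left, Equiv.swap_apply_right]
      ring
    · intro k _ hk
      simp only [Finset.mem_insert, Finset.mem_singleton] at hk
      push_neg at hk
      simp only [swapδ]
      rw [Equiv.swap_apply_of_ne_of_ne hk.1 hk.2]
      ring
  have expand : (∑ k : Fin (n-2), δ k * (x (emb n k))^2)
      - (∑ k : Fin (n-2), swapδ δ i j k * (x (emb n k))^2)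
      = ∑ k : Fin (n-2), (δ k - swapδ δ i j k) * (x (emb n k))^2 := by
    rw [← Finset.sum_sub_distrib]
    exact Finset.sum_congr rfl fun k _ => by ring
  have := expand.trans key
  unfold pdelta
  rw [hsum]
  linarith [this]

lemma continuous_pdelta (hn : 3 ≤ n) (δ : EuclideanSpace ℝ (Fin (n-2))) :
    Continuous (pdelta n hn δ) := by
  unfold pdelta
  refine Continuous.sub (Continuous.add ?_ ?_) ?_
  · exact continuous_finset_sum _ fun k _ =>
      continuous_const.mul (((EuclideanSpace.proj (emb n k)).continuous).pow 2)
  · exact continuous_const.mul (((EuclideanSpace.proj (⟨n-2, by omega⟩ : Fin n)).continuous).pow 2)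
  · exact ((EuclideanSpace.proj (⟨n-1, by omega⟩ : Fin n)).continuous).pow 2

lemma coord_abs_le_norm {m : ℕ} (y : EuclideanSpace ℝ (Fin m)) (k : Fin m) : |y k| ≤ ‖y‖ := by
  rw [EuclideanSpace.norm_eq, ← Real.sqrt_sq_eq_abs]
  apply Real.sqrt_le_sqrt
  calc y k ^ 2 ≤ ∑ l, ‖y l‖^2 :=
        (Finset.single_le_sum (f := fun l => ‖y l‖^2) (fun l _ => by positivity)
          (Finset.mem_univ k)).trans_eq' (by simp [sq_abs])
    _ = _ := rfl

lemma coord_sq_le_one (x : sphere (0 : E n) 1) (k : Fin n) : ((x : E n) k)^2 ≤ 1 := by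
  have h1 : ‖(x : E n)‖ = 1 := mem_sphere_zero_iff_norm.1 x.2
  have := coord_abs_le_norm (x : E n) k
  rw [h1] at this
  nlinarith [abs_nonneg ((x : E n) k), sq_abs ((x : E n) k)]

/-- The basic integrals in `Bfun`. -/
def Afun (n : ℕ) (hn : 3 ≤ n) (δ : EuclideanSpace ℝ (Fin (n - 2))) (i : Fin n) : ℝ :=
  ∫ x : sphere (0 : E n) 1,
      (if 0 < pdelta n hn δ (x : E n) then ((x : E n) i) ^ 2 else 0) ∂(sphMeasure n)

lemma Bfun_eq_neg_Afun (hn : 3 ≤ n) (δ : EuclideanSpace ℝ (Fin (n - 2))) (i : Fin n) :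
    Bfun n hn δ i = - Afun n hn δ i := rfl

lemma integrable_ind (hn : 3 ≤ n) (δ : EuclideanSpace ℝ (Fin (n-2))) (k : Fin n) :
    Integrable (fun x : sphere (0:E n) 1 =>
      if 0 < pdelta n hn δ (x : E n) then ((x : E n) k)^2 else 0) (sphMeasure n) := by
  have hS : MeasurableSet {x : sphere (0:E n) 1 | 0 < pdelta n hn δ (x : E n)} :=
    measurableSet_lt measurable_const
      ((continuous_pdelta hn δ).comp continuous_subtype_val).measurable
  have hmeas : Measurable fun x : sphere (0:E n) 1 =>
      if 0 < pdelta n hn δ (x : E n) then ((x : E n) k)^2 else 0 :=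
    Measurable.ite hS
      (((EuclideanSpace.proj k).continuous.comp continuous_subtype_val).measurable.pow_const 2)
      measurable_const
  refine (integrable_const (1:ℝ)).mono' hmeas.aestronglyMeasurable (ae_of_all _ fun x => ?_)
  by_cases h : 0 < pdelta n hn δ (x : E n) <;> simp only [h, if_true, if_false]
  · rw [Real.norm_eq_abs, abs_of_nonneg (by positivity)]
    exact coord_sq_le_one x k
  · simp

lemma Afun_swap (hn : 3 ≤ n) (δ : EuclideanSpace ℝ (Fin (n-2))) (i j : Fin (n-2)) :
    Afun n hn δ (emb n j) = Afun n hn (swapδ δ i j) (emb n i) := by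
  unfold Afun
  rw [← integral_sphMap (swapT i j)
    (fun y : E n => if 0 < pdelta n hn δ y then (y (emb n j))^2 else 0)]
  refine integral_congr_ae (Filter.Eventually.of_forall fun x => ?_)
  have h1 : pdelta n hn δ (swapT i j (x : E n)) = pdelta n hn (swapδ δ i j) (x : E n) :=
    pdelta_swapT hn δ i j (x : E n)
  have h2 : swapT i j (x : E n) (emb n j) = (x : E n) (emb n i) := by
    rw [swapT_apply, swap_emb, Equiv.swap_apply_right]
  simp only [h1, h2]

end Statement7Aux

set_option maxHeartbeats 1000000 in
/-- For `|δ|` small, the map `δᵢ ↦ C_i(δ)` is order reversing: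
if `δᵢ > δⱼ` then `C_i(δ) < C_j(δ)` (for indices `1 ≤ i, j ≤ n-2`). -/
theorem statement7 (n : ℕ) (hn : 3 ≤ n) :
    ∃ κ₀ : ℝ, 0 < κ₀ ∧
      ∀ δ : EuclideanSpace ℝ (Fin (n - 2)), 0 < ‖δ‖ → ‖δ‖ < κ₀ →
        ∀ i j : Fin (n - 2), δ j < δ i →
          Cfun n hn δ ⟨(i : ℕ), lt_of_lt_of_le i.isLt (Nat.sub_le n 2)⟩
            < Cfun n hn δ ⟨(j : ℕ), lt_of_lt_of_le j.isLt (Nat.sub_le n 2)⟩ := by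
  refine ⟨1/(4*(n:ℝ)), by positivity, ?_⟩
  intro δ _hpos hlt i j hij
  have hij' : i ≠ j := fun h => lt_irrefl _ (h ▸ hij)
  have hn3 : (3:ℝ) ≤ (n:ℝ) := by exact_mod_cast hn
  -- coordinate bounds
  have habs : ∀ k, |δ k| < 1/(4*(n:ℝ)) := fun k => lt_of_le_of_lt (coord_abs_le_norm δ k) hlt
  have hκ : 1/(4*(n:ℝ)) ≤ 1/12 := by
    rw [div_le_div_iff₀ (by positivity) (by norm_num)]
    linarith
  have hδi : |δ i| ≤ 1/12 := le_trans (habs i).le hκ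
  have hδj : |δ j| ≤ 1/12 := le_trans (habs j).le hκ
  set dt := ∑ k : Fin (n-2), δ k with hdt
  have htilde : |dt| ≤ 1/4 := by
    calc |dt| ≤ ∑ k : Fin (n-2), |δ k| := Finset.abs_sum_le_sum_abs δ Finset.univ
      _ ≤ (Finset.univ : Finset (Fin (n-2))).card • (1/(4*(n:ℝ))) :=
          Finset.sum_le_card_nsmul _ _ _ (fun k _ => (habs k).le)
      _ = ((n-2 : ℕ) : ℝ) * (1/(4*(n:ℝ))) := by
          rw [Finset.card_univ, Fintype.card_fin, nsmul_eq_mul]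
      _ ≤ (n:ℝ) * (1/(4*(n:ℝ))) := by
          apply mul_le_mul_of_nonneg_right _ (by positivity)
          exact_mod_cast Nat.sub_le n 2
      _ = 1/4 := by field_simp
  set m := (δ i + δ j)/4 with hmdef
  have hm : |m| ≤ 1/24 := by
    rw [hmdef]
    rw [abs_div]
    rw [abs_of_nonneg (by norm_num : (0:ℝ) ≤ 4)]
    have := abs_add_le (δ i) (δ j)
    have h1 := abs_le.1 hδi
    have h2 := abs_le.1 hδj
    rw [div_le_iff₀ (by norm_num)]
    calc |δ i + δ j| ≤ |δ i| + |δ j| := abs_add_le _ _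
      _ ≤ 1/24 * 4 := by linarith
  have hden : (7:ℝ)/4 ≤ 2 - dt := by have := abs_le.1 htilde; linarith
  have hm' := abs_le.1 hm
  set s2 := (1/2 - m)/(2 - dt) with hs2def
  have hs2pos : 0 < s2 := div_pos (by linarith) (by linarith)
  have hkey : (2 - dt) * s2 = 1/2 - m := by
    rw [hs2def, mul_div_cancel₀ _ (by linarith : (2:ℝ) - dt ≠ 0)]
  have hs2lt : s2 ≤ 13/42 := by nlinarith
  set r2 := 1/2 - s2 with hr2def
  have hr2pos : 0 < r2 := by rw [hr2def]; linarith
  -- the witness point on the sphere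
  set K2 : Fin n := ⟨n-2, by omega⟩ with hK2
  set K3 : Fin n := ⟨n-1, by omega⟩ with hK3
  set x₀ : E n := WithLp.toLp 2 (fun k : Fin n => if k = emb n i then Real.sqrt (1/2)
    else if k = K2 then Real.sqrt s2 else if k = K3 then Real.sqrt r2 else 0) with hx₀def
  have hIK2 : emb n i ≠ K2 := Fin.ne_of_val_ne (by simp only [emb, hK2]; have := i.isLt; omega)
  have hIK3 : emb n i ≠ K3 := Fin.ne_of_val_ne (by simp only [emb, hK3]; have := i.isLt; omega)
  have hK23 : K2 ≠ K3 := Fin.ne_of_val_ne (by simp only [hK2, hK3]; omega)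
  have hx₀emb : ∀ k : Fin (n-2), x₀ (emb n k) = if k = i then Real.sqrt (1/2) else 0 := by
    intro k
    have hk2 : emb n k ≠ K2 := Fin.ne_of_val_ne (by simp only [emb, hK2]; have := k.isLt; omega)
    have hk3 : emb n k ≠ K3 := Fin.ne_of_val_ne (by simp only [emb, hK3]; have := k.isLt; omega)
    by_cases hki : k = i
    · subst hki; simp [hx₀def]
    · have hne : emb n k ≠ emb n i := fun h => hki (emb_inj.1 h)
      simp [hx₀def, hne, hk2, hk3, hki]
  have hx₀K2 : x₀ K2 = Real.sqrt s2 := by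
    simp [hx₀def, Ne.symm hIK2]
  have hx₀K3 : x₀ K3 = Real.sqrt r2 := by
    simp [hx₀def, Ne.symm hIK3, Ne.symm hK23, hK23]
  have hx₀sph : x₀ ∈ sphere (0 : E n) 1 := by
    rw [mem_sphere_zero_iff_norm, EuclideanSpace.norm_eq]
    have e1 : Real.sqrt (1/2) ^ 2 = (1/2 : ℝ) := Real.sq_sqrt (by norm_num)
    have e2 : Real.sqrt s2 ^ 2 = s2 := Real.sq_sqrt hs2pos.le
    have e3 : Real.sqrt r2 ^ 2 = r2 := Real.sq_sqrt hr2pos.le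
    have hterm : ∀ k : Fin n, ‖x₀ k‖^2 = (if k = emb n i then (1/2:ℝ) else 0)
        + (if k = K2 then s2 else 0) + (if k = K3 then r2 else 0) := by
      intro k
      simp only [hx₀def, Real.norm_eq_abs, sq_abs]
      by_cases h1 : k = emb n i
      · subst h1
        simp [hIK2, hIK3, e1]
      · by_cases h2 : k = K2
        · subst h2
          simp [Ne.symm hIK2, hK23, e2]
        · by_cases h3 : k = K3
          · subst h3
            simp [Ne.symm hIK3, Ne.symm hK23, e3]
          · simp [h1, h2, h3]
    have hsq : ∑ k : Fin n, ‖x₀ k‖^2 = 1 := by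
      rw [Finset.sum_congr rfl fun k _ => hterm k]
      rw [Finset.sum_add_distrib, Finset.sum_add_distrib,
        Finset.sum_ite_eq' Finset.univ (emb n i) (fun _ => (1/2:ℝ)),
        Finset.sum_ite_eq' Finset.univ K2 (fun _ => s2),
        Finset.sum_ite_eq' Finset.univ K3 (fun _ => r2)]
      simp only [Finset.mem_univ, if_true]
      rw [hr2def]; ring
    rw [hsq, Real.sqrt_one]
  -- values of the polynomials at the witness point
  have hsum_ind : ∀ (γ : EuclideanSpace ℝ (Fin (n-2))),
      ∑ k : Fin (n-2), γ k * (x₀ (emb n k))^2 = γ i * (1/2) := by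
    intro γ
    have hterm : ∀ k : Fin (n-2), γ k * (x₀ (emb n k))^2
        = if k = i then γ i * (1/2) else 0 := by
      intro k; rw [hx₀emb k]; split_ifs with h
      · subst h; rw [Real.sq_sqrt (by norm_num : (0:ℝ) ≤ 1/2)]
      · ring
    rw [Finset.sum_congr rfl fun k _ => hterm k,
      Finset.sum_ite_eq' Finset.univ i (fun _ => γ i * (1/2))]
    simp
  have hswsum : ∑ k : Fin (n-2), swapδ δ i j k = dt := by
    rw [hdt, show (fun k => swapδ δ i j k) = (fun k => δ (Equiv.swap i j k)) from rfl]
    exact Equiv.sum_comp (Equiv.swap i j) δ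
  have hpx : pdelta n hn δ x₀ = (δ i - δ j)/4 := by
    unfold pdelta
    rw [hsum_ind δ, hx₀K2, hx₀K3, Real.sq_sqrt hs2pos.le, Real.sq_sqrt hr2pos.le, ← hdt]
    rw [hr2def]
    have : (2 - dt) * s2 = 1/2 - m := hkey
    rw [hmdef] at this
    linarith
  have hpx' : pdelta n hn (swapδ δ i j) x₀ = (δ j - δ i)/4 := by
    unfold pdelta
    rw [hsum_ind (swapδ δ i j), hx₀K2, hx₀K3, Real.sq_sqrt hs2pos.le, Real.sq_sqrt hr2pos.le,
      hswsum]
    have hswi : swapδ δ i j i = δ j := by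
      simp only [swapδ]; rw [Equiv.swap_apply_left]
    rw [hswi, hr2def]
    have : (2 - dt) * s2 = 1/2 - m := hkey
    rw [hmdef] at this
    linarith
  -- the good open set
  set U : Set (sphere (0 : E n) 1) :=
    {x : sphere (0 : E n) 1 | 0 < pdelta n hn δ (x : E n) ∧
      pdelta n hn (swapδ δ i j) (x : E n) < 0} with hUdef
  have hUopen : IsOpen U := by
    have h1 : IsOpen {x : sphere (0:E n) 1 | 0 < pdelta n hn δ (x : E n)} :=
      (isOpen_Ioi.preimage (continuous_pdelta hn δ)).preimage continuous_subtype_val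
    have h2 : IsOpen {x : sphere (0:E n) 1 | pdelta n hn (swapδ δ i j) (x : E n) < 0} :=
      (isOpen_Iio.preimage (continuous_pdelta hn (swapδ δ i j))).preimage continuous_subtype_val
    exact (h1.inter h2 : _)
  have hU0 : (⟨x₀, hx₀sph⟩ : sphere (0:E n) 1) ∈ U := by
    refine ⟨?_, ?_⟩
    · show 0 < pdelta n hn δ x₀
      rw [hpx]; linarith
    · show pdelta n hn (swapδ δ i j) x₀ < 0
      rw [hpx']; linarith
  -- the comparison function
  set g : sphere (0:E n) 1 → ℝ := fun x =>
    ((if 0 < pdelta n hn δ (x : E n) then (1:ℝ) else 0)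
      - (if 0 < pdelta n hn (swapδ δ i j) (x : E n) then (1:ℝ) else 0))
    * (((x : E n) (emb n i))^2 - ((x : E n) (emb n j))^2) with hgdef
  have hg0 : ∀ x, 0 ≤ g x := by
    intro x
    have hdiff := pdelta_sub hn δ hij' (x : E n)
    rw [hgdef]
    by_cases hA : 0 < pdelta n hn δ (x : E n) <;>
      by_cases hB : 0 < pdelta n hn (swapδ δ i j) (x : E n) <;>
        simp only [hA, hB, if_true, if_false]
    · norm_num
    · have hcd : 0 < (δ i - δ j) * (((x:E n) (emb n i))^2 - ((x:E n) (emb n j))^2) := by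
        rw [← hdiff]; linarith [not_lt.1 hB]
      rcases mul_pos_iff.1 hcd with ⟨_, h⟩ | ⟨h, _⟩
      · linarith
      · linarith
    · have hcd : (δ i - δ j) * (((x:E n) (emb n i))^2 - ((x:E n) (emb n j))^2) < 0 := by
        rw [← hdiff]; linarith [not_lt.1 hA]
      rcases mul_neg_iff.1 hcd with ⟨_, h⟩ | ⟨h, _⟩
      · nlinarith
      · linarith
    · norm_num
  have hUsupp : U ⊆ Function.support g := by
    intro x hx
    obtain ⟨hxA, hxB⟩ := hx
    have hdiff := pdelta_sub hn δ hij' (x : E n)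
    have hcd : 0 < (δ i - δ j) * (((x:E n) (emb n i))^2 - ((x:E n) (emb n j))^2) := by
      rw [← hdiff]; linarith
    have hcd' : 0 < ((x:E n) (emb n i))^2 - ((x:E n) (emb n j))^2 := by
      rcases mul_pos_iff.1 hcd with ⟨_, h⟩ | ⟨h, _⟩
      · exact h
      · linarith
    have : g x = ((x:E n) (emb n i))^2 - ((x:E n) (emb n j))^2 := by
      rw [hgdef]
      simp only [hxA, if_true, not_lt.2 hxB.le, if_false]
      ring
    rw [Function.mem_support, this]
    exact ne_of_gt hcd'
  -- integrability
  have hF1 := integrable_ind hn δ (emb n i)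
  have hF2 := integrable_ind hn (swapδ δ i j) (emb n i)
  have hF3 := integrable_ind hn δ (emb n j)
  have hF4 := integrable_ind hn (swapδ δ i j) (emb n j)
  have hgeq : g = fun x : sphere (0:E n) 1 =>
      ((if 0 < pdelta n hn δ (x : E n) then ((x:E n) (emb n i))^2 else 0)
        - (if 0 < pdelta n hn (swapδ δ i j) (x : E n) then ((x:E n) (emb n i))^2 else 0))
      + ((if 0 < pdelta n hn (swapδ δ i j) (x : E n) then ((x:E n) (emb n j))^2 else 0)
        - (if 0 < pdelta n hn δ (x : E n) then ((x:E n) (emb n j))^2 else 0)) := by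
    funext x
    rw [hgdef]
    by_cases hA : 0 < pdelta n hn δ (x : E n) <;>
      by_cases hB : 0 < pdelta n hn (swapδ δ i j) (x : E n) <;>
        simp only [hA, hB, if_true, if_false] <;> ring
  have hgint : Integrable g (sphMeasure n) := by
    rw [hgeq]; exact (hF1.sub hF2).add (hF4.sub hF3)
  have hintval : ∫ x, g x ∂(sphMeasure n)
      = (Afun n hn δ (emb n i) - Afun n hn (swapδ δ i j) (emb n i))
        + (Afun n hn (swapδ δ i j) (emb n j) - Afun n hn δ (emb n j)) := by
    have h12 : Integrable (fun x : sphere (0:E n) 1 =>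
        (if 0 < pdelta n hn δ (x : E n) then ((x:E n) (emb n i))^2 else 0)
        - (if 0 < pdelta n hn (swapδ δ i j) (x : E n) then ((x:E n) (emb n i))^2 else 0))
        (sphMeasure n) := hF1.sub hF2
    have h34 : Integrable (fun x : sphere (0:E n) 1 =>
        (if 0 < pdelta n hn (swapδ δ i j) (x : E n) then ((x:E n) (emb n j))^2 else 0)
        - (if 0 < pdelta n hn δ (x : E n) then ((x:E n) (emb n j))^2 else 0))
        (sphMeasure n) := hF4.sub hF3
    rw [hgeq, integral_add h12 h34, integral_sub hF1 hF2, integral_sub hF4 hF3]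
    rfl
  have hA1 : Afun n hn δ (emb n j) = Afun n hn (swapδ δ i j) (emb n i) := Afun_swap hn δ i j
  have hA2 : Afun n hn (swapδ δ i j) (emb n j) = Afun n hn δ (emb n i) := by
    have := Afun_swap hn (swapδ δ i j) i j
    rwa [swapδ_swapδ] at this
  have hA0 : Afun n hn 0 (emb n j) = Afun n hn 0 (emb n i) := by
    have := Afun_swap hn 0 i j
    rwa [swapδ_zero] at this
  have hIpos : 0 < ∫ x, g x ∂(sphMeasure n) := by
    rw [integral_pos_iff_support_of_nonneg_ae (Filter.Eventually.of_forall hg0) hgint]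
    exact lt_of_lt_of_le (sphMeasure_pos hn hUopen ⟨_, hU0⟩) (measure_mono hUsupp)
  have hmain : Afun n hn δ (emb n j) < Afun n hn δ (emb n i) := by
    rw [hintval] at hIpos
    linarith [hA1, hA2, hIpos]
  show Cfun n hn δ (emb n i) < Cfun n hn δ (emb n j)
  simp only [Cfun, Bfun_eq_neg_Afun]
  linarith [hA0, hmain]
end
end

section
/- Fix μ > 0 and a > 0. Then there exist constants C > 0 and κ₀ ∈ (0, 1) (depending on μ and a) such that for all κ ∈ (0, κ₀): | ∫_0^μ ( √(κ + a x²) − √a · x ) dx + (κ/(4√a)) · ln κ | ≤ C κ. -/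
/-!
`F(y) = y √(κ + a y²) / 2 + κ / (2√a) · log (√a y + √(κ + a y²))` is a primitive of
`√(κ + a y²)`, and `F(0) = κ/(4√a) · log κ`. Hence the integral plus `κ/(4√a) · log κ` equals
`μ/2 · (√(κ + aμ²) - √a μ) + κ/(2√a) · log (√a μ + √(κ + aμ²))`. The first term is at most
`κ/(4√a)` because `√(κ + aμ²) - √a μ = κ / (√(κ + aμ²) + √a μ)`, and the logarithm stays bounded
for `κ ∈ (0, 1]` by monotonicity in `κ`.
-/

open MeasureTheory Set Real

noncomputable def sqrtQuadPrimitive (κ a y : ℝ) : ℝ :=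
  y * √(κ + a * y ^ 2) / 2 + κ / (2 * √a) * log (√a * y + √(κ + a * y ^ 2))

lemma sqrt_mul_add_sqrt_add_mul_sq_pos {κ a : ℝ} (hκ : 0 < κ) (ha : 0 ≤ a) (y : ℝ) :
    0 < √a * y + √(κ + a * y ^ 2) := by
  have h : √a * |y| < √(κ + a * y ^ 2) := by
    rw [← sqrt_sq_eq_abs, ← sqrt_mul ha]
    exact sqrt_lt_sqrt (by positivity) (by linarith)
  nlinarith [neg_abs_le y, sqrt_nonneg a]

lemma hasDerivAt_sqrtQuadPrimitive {κ a : ℝ} (hκ : 0 < κ) (ha : 0 < a) (x : ℝ) :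
    HasDerivAt (sqrtQuadPrimitive κ a) (√(κ + a * x ^ 2)) x := by
  have hq : 0 < κ + a * x ^ 2 := by positivity
  have hs_pos : 0 < √(κ + a * x ^ 2) := sqrt_pos.2 hq
  have hs_sq : √(κ + a * x ^ 2) ^ 2 = κ + a * x ^ 2 := sq_sqrt hq.le
  have hr_pos : 0 < √a := sqrt_pos.2 ha
  have hr_sq : √a ^ 2 = a := sq_sqrt ha.le
  have hpos := sqrt_mul_add_sqrt_add_mul_sq_pos hκ ha.le x
  have hs : HasDerivAt (fun y => √(κ + a * y ^ 2)) (a * x / √(κ + a * x ^ 2)) x := by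
    have hq' : HasDerivAt (fun y => κ + a * y ^ 2) (a * (2 * x)) x := by
      simpa using ((hasDerivAt_pow 2 x).const_mul a).const_add κ
    exact (hq'.sqrt hq.ne').congr_deriv (by field_simp)
  have hlog : HasDerivAt (fun y => log (√a * y + √(κ + a * y ^ 2)))
      (√a / √(κ + a * x ^ 2)) x := by
    refine (((hasDerivAt_id' x).const_mul √a).add hs).log hpos.ne' |>.congr_deriv ?_
    simp only [Pi.add_apply]
    field_simp
    linear_combination -x * hr_sq
  refine (((hasDerivAt_id' x).mul hs).div_const 2 |>.add
    (hlog.const_mul (κ / (2 * √a)))).congr_deriv ?_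
  field_simp
  linear_combination -hs_sq

lemma integral_sqrt_add_mul_sq_sub_add_log_eq {μ a κ : ℝ} (hμ : 0 ≤ μ) (ha : 0 < a) (hκ : 0 < κ) :
    (∫ x in Ioo 0 μ, (√(κ + a * x ^ 2) - √a * x)) + κ / (4 * √a) * log κ
      = μ / 2 * (√(κ + a * μ ^ 2) - √a * μ) + κ / (2 * √a) * log (√a * μ + √(κ + a * μ ^ 2)) := by
  have hderiv (x : ℝ) : HasDerivAt (fun y => sqrtQuadPrimitive κ a y - √a * (y ^ 2 / 2))
      (√(κ + a * x ^ 2) - √a * x) x := by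
    refine (hasDerivAt_sqrtQuadPrimitive hκ ha x).sub ?_
    simpa using ((hasDerivAt_pow 2 x).div_const 2).const_mul √a
  have hcont : Continuous fun x => √(κ + a * x ^ 2) - √a * x := by fun_prop
  have hftc := intervalIntegral.integral_eq_sub_of_hasDerivAt (fun x _ => hderiv x)
    (hcont.intervalIntegrable 0 μ)
  rw [intervalIntegral.integral_of_le hμ, integral_Ioc_eq_integral_Ioo] at hftc
  simp only [hftc, sqrtQuadPrimitive, mul_zero, add_zero, zero_mul, zero_div, zero_add, sub_zero,
    ne_eq, OfNat.ofNat_ne_zero, not_false_eq_true, zero_pow, log_sqrt hκ.le]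
  ring

lemma abs_mul_sqrt_add_mul_sq_sub_le {μ a κ : ℝ} (hμ : 0 ≤ μ) (ha : 0 < a) (hκ : 0 ≤ κ) :
    |μ / 2 * (√(κ + a * μ ^ 2) - √a * μ)| ≤ κ / (4 * √a) := by
  have hr_pos : 0 < √a := sqrt_pos.2 ha
  have hr_sq : √a ^ 2 = a := sq_sqrt ha.le
  have hs_sq : √(κ + a * μ ^ 2) ^ 2 = κ + a * μ ^ 2 := sq_sqrt (by positivity)
  have hle : √a * μ ≤ √(κ + a * μ ^ 2) := by
    nlinarith [sqrt_nonneg (κ + a * μ ^ 2), mul_nonneg hr_pos.le hμ]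
  rw [abs_of_nonneg (by nlinarith), le_div_iff₀ (by positivity)]
  -- `(√(κ + aμ²) - √a μ) (√(κ + aμ²) + √a μ) = κ` and `2 √a μ ≤ √(κ + aμ²) + √a μ`
  nlinarith [mul_le_mul_of_nonneg_left hle (sub_nonneg.2 hle)]

lemma abs_log_sqrt_mul_add_sqrt_add_mul_sq_le {μ a κ : ℝ} (hμ : 0 < μ) (ha : 0 < a)
    (hκ : 0 ≤ κ) (hκ₁ : κ ≤ 1) :
    |log (√a * μ + √(κ + a * μ ^ 2))| ≤ max |log (√a * μ)| |log (√a * μ + √(1 + a * μ ^ 2))| := by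
  have hr_pos : 0 < √a := sqrt_pos.2 ha
  refine abs_le_max_abs_abs (log_le_log (by positivity) ?_) (log_le_log (by positivity) ?_)
  · linarith [sqrt_nonneg (κ + a * μ ^ 2)]
  · gcongr

/-- For fixed `μ, a > 0` and small `κ > 0`,
`∫₀^μ (√(κ + a x²) − √a x) dx = −(κ/(4√a)) ln κ + O(κ)`. -/
theorem statement10 (μ a : ℝ) (hμ : 0 < μ) (ha : 0 < a) :
    ∃ C : ℝ, 0 < C ∧ ∃ κ₀ ∈ Set.Ioo (0 : ℝ) 1, ∀ κ ∈ Set.Ioo (0 : ℝ) κ₀,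
      |(∫ x in Set.Ioo (0 : ℝ) μ, (Real.sqrt (κ + a * x ^ 2) - Real.sqrt a * x))
          + (κ / (4 * Real.sqrt a)) * Real.log κ| ≤ C * κ := by
  set L := max |log (√a * μ)| |log (√a * μ + √(1 + a * μ ^ 2))|
  have hr_pos : 0 < √a := sqrt_pos.2 ha
  have hL : 0 ≤ L := (abs_nonneg _).trans (le_max_left _ _)
  refine ⟨(1 + 2 * L) / (4 * √a), by positivity, 1 / 2, by norm_num, fun κ ⟨hκ, hκ₀⟩ => ?_⟩
  rw [integral_sqrt_add_mul_sq_sub_add_log_eq hμ.le ha hκ]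
  calc _ ≤ |μ / 2 * (√(κ + a * μ ^ 2) - √a * μ)|
          + |κ / (2 * √a) * log (√a * μ + √(κ + a * μ ^ 2))| := abs_add_le _ _
    _ ≤ κ / (4 * √a) + κ / (2 * √a) * L := by
        rw [abs_mul (κ / (2 * √a)), abs_of_pos (by positivity : 0 < κ / (2 * √a))]
        gcongr
        · exact abs_mul_sqrt_add_mul_sq_sub_le hμ.le ha hκ.le
        · exact abs_log_sqrt_mul_add_sqrt_add_mul_sq_le hμ ha hκ.le (by linarith)
    _ = (1 + 2 * L) / (4 * √a) * κ := by field_simp; ring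
end

section
/- Let n ≥ 3. There exist constants C > 0 and κ₀ ∈ (0, 1), depending only on n, such that for every μ ∈ (0, 1/2) and every δ ∈ ℝ^{n−2} with |δ| ≤ κ₀ μ, the surface measure of the set {x ∈ S^{n−1} : |x_n| ≥ μ and exactly one of p_δ(x) > 0, p₀(x) > 0 holds} is at most C |δ| / μ. -/
open MeasureTheory Metric Filter Set
open scoped Pointwise ENNReal NNReal

noncomputable section

lemma abs_coord_le_norm {m : ℕ} (x : EuclideanSpace ℝ (Fin m)) (i : Fin m) : |x i| ≤ ‖x‖ := by
  rw [EuclideanSpace.norm_eq]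
  have h1 : |x i| = Real.sqrt (‖x i‖ ^ 2) := by
    rw [Real.sqrt_sq (norm_nonneg _)]; exact (Real.norm_eq_abs _).symm
  rw [h1]
  exact Real.sqrt_le_sqrt (Finset.single_le_sum (f := fun j => ‖x j‖ ^ 2)
    (fun j _ => sq_nonneg _) (Finset.mem_univ i))

/-- slab shear: linear map on pi space -/
lemma shear_vol {n : ℕ} (j k : Fin n) (hjk : j ≠ k) (ε t : ℝ) (ht : 0 ≤ t) :
    (volume : Measure (Fin n → ℝ)) {f : Fin n → ℝ | |f j - ε * f k| ≤ t ∧ ∀ i, |f i| ≤ 1}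
      ≤ ENNReal.ofReal (2 * t) * 2 ^ n := by
  classical
  set M : Matrix (Fin n) (Fin n) ℝ :=
    (1 : Matrix (Fin n) (Fin n) ℝ).updateRow j
      ((1 : Matrix (Fin n) (Fin n) ℝ) j + (-ε) • (1 : Matrix (Fin n) (Fin n) ℝ) k) with hM
  set L : (Fin n → ℝ) →ₗ[ℝ] (Fin n → ℝ) := Matrix.toLin' M with hL
  have hdet : LinearMap.det L = 1 := by
    rw [hL, LinearMap.det_toLin', hM, Matrix.det_updateRow_add_smul_self _ hjk, Matrix.det_one]
  have hLapp : ∀ (f : Fin n → ℝ) (i : Fin n), L f i = if i = j then f j - ε * f k else f i := by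
    intro f i
    rw [hL, Matrix.toLin'_apply, Matrix.mulVec, dotProduct]
    by_cases h : i = j
    · subst h
      simp only [hM, Matrix.updateRow_self, Pi.add_apply, Pi.smul_apply, Matrix.one_apply,
        smul_eq_mul, mul_add, mul_ite, mul_one, mul_zero, Finset.sum_add_distrib,
        smul_eq_mul, mul_add, mul_ite, mul_one, mul_zero, ite_mul, zero_mul, one_mul,
        Finset.sum_add_distrib, Finset.sum_ite_eq, Finset.mem_univ, if_true, mul_neg, neg_mul]
      simp only [add_mul, ite_mul, one_mul, zero_mul, neg_mul]
      rw [Finset.sum_add_distrib]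
      simp only [Finset.sum_ite_eq, Finset.mem_univ, if_true, Finset.sum_neg_distrib]
      ring
    · simp [hM, Matrix.updateRow_ne h, Matrix.one_apply, Finset.sum_ite_eq, h]
  set Bx : Set (Fin n → ℝ) := Set.pi Set.univ (fun i => if i = j then Icc (-t) t else Icc (-1 : ℝ) 1) with hBx
  have hsub : {f : Fin n → ℝ | |f j - ε * f k| ≤ t ∧ ∀ i, |f i| ≤ 1} ⊆ L ⁻¹' Bx := by
    rintro f ⟨h1, h2⟩
    intro i _
    rw [hLapp]
    by_cases h : i = j
    · simp only [h, if_pos rfl]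
      exact abs_le.1 h1
    · simp only [if_neg h]
      exact abs_le.1 (h2 i)
  calc (volume : Measure (Fin n → ℝ)) {f : Fin n → ℝ | |f j - ε * f k| ≤ t ∧ ∀ i, |f i| ≤ 1}
      ≤ volume (L ⁻¹' Bx) := measure_mono hsub
    _ = ENNReal.ofReal |(LinearMap.det L)⁻¹| * volume Bx := by
        rw [Measure.addHaar_preimage_linearMap volume (by rw [hdet]; norm_num)]
    _ = volume Bx := by rw [hdet]; simp
    _ ≤ ENNReal.ofReal (2 * t) * 2 ^ n := by
        rw [hBx, volume_pi_pi]
        calc (∏ i, volume (if i = j then Icc (-t) t else Icc (-1 : ℝ) 1))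
            = volume (Icc (-t) t) * ∏ i ∈ Finset.univ.erase j, volume (Icc (-1 : ℝ) 1) := by
              rw [← Finset.mul_prod_erase Finset.univ _ (Finset.mem_univ j), if_pos rfl]
              congr 1
              exact Finset.prod_congr rfl fun i hi => by
                rw [if_neg (Finset.ne_of_mem_erase hi)]
          _ ≤ ENNReal.ofReal (2 * t) * 2 ^ n := by
              rw [Real.volume_Icc, Real.volume_Icc, Finset.prod_const]
              have h1 : ENNReal.ofReal (t - -t) = ENNReal.ofReal (2 * t) := by ring_nf
              have h2 : ENNReal.ofReal ((1 : ℝ) - -1) = 2 := by norm_num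
              rw [h1, h2]
              exact mul_le_mul_right (pow_le_pow_right₀ one_le_two (Finset.card_le_univ _ |>.trans (by simp))) _

lemma slab_sphere {n : ℕ} (j k : Fin n) (hjk : j ≠ k) (ε t : ℝ) (ht : 0 ≤ t) :
    (volume : Measure (E n)).toSphere {x : sphere (0 : E n) 1 | |(x : E n) j - ε * (x : E n) k| ≤ t}
      ≤ (n : ℝ≥0∞) * (ENNReal.ofReal (2 * t) * 2 ^ n) := by
  classical
  set B : Set (sphere (0 : E n) 1) := {x | |(x : E n) j - ε * (x : E n) k| ≤ t} with hBdef
  have hco : ∀ (j : Fin n), Measurable fun a : sphere (0 : E n) 1 => (a : E n) j :=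
    fun j => (measurable_pi_apply j).comp ((MeasurableEquiv.toLp 2 (Fin n → ℝ)).symm.measurable.comp measurable_subtype_coe)
  have hB : MeasurableSet B :=
    measurableSet_le (((hco j).sub ((hco k).const_mul ε)).abs) measurable_const
  rw [Measure.toSphere_apply' _ hB, finrank_euclideanSpace_fin]
  set S : Set (E n) := {y | |y j - ε * y k| ≤ t ∧ ∀ i, |y i| ≤ 1} with hSdef
  have hsub : Ioo (0 : ℝ) 1 • ((↑) '' B) ⊆ S := by
    intro z hz
    rw [Set.mem_smul] at hz
    obtain ⟨r, hr, w, hw, rfl⟩ := hz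
    obtain ⟨x, hxB, rfl⟩ := hw
    have hxn : ‖(x : E n)‖ = 1 := mem_sphere_zero_iff_norm.mp x.2
    have hsm : ∀ i, (r • (x : E n)) i = r * (x : E n) i := fun i => rfl
    have hr0 : |r| ≤ 1 := by
      rw [abs_of_pos hr.1]; exact hr.2.le
    constructor
    · have : (r • (x : E n)) j - ε * (r • (x : E n)) k
          = r * ((x : E n) j - ε * (x : E n) k) := by rw [hsm, hsm]; ring
      rw [this, abs_mul]
      exact (mul_le_mul hr0 hxB (abs_nonneg _) zero_le_one).trans_eq (one_mul t)
    · intro i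
      rw [hsm, abs_mul]
      exact (mul_le_mul hr0 ((abs_coord_le_norm _ i).trans hxn.le) (abs_nonneg _)
        zero_le_one).trans_eq (one_mul 1)
  have hSA : S = (MeasurableEquiv.toLp 2 (Fin n → ℝ)).symm ⁻¹'
      {f : Fin n → ℝ | |f j - ε * f k| ≤ t ∧ ∀ i, |f i| ≤ 1} := rfl
  have hA : MeasurableSet {f : Fin n → ℝ | |f j - ε * f k| ≤ t ∧ ∀ i, |f i| ≤ 1} := by
    apply MeasurableSet.inter
    · exact measurableSet_le
        (by fun_prop : Measurable fun f : Fin n → ℝ => |f j - ε * f k|)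
        measurable_const
    · show MeasurableSet {f : Fin n → ℝ | ∀ i, |f i| ≤ 1}
      have : {f : Fin n → ℝ | ∀ i, |f i| ≤ 1} = ⋂ i, {f | |f i| ≤ 1} := by ext f; simp
      rw [this]
      exact MeasurableSet.iInter fun i =>
        measurableSet_le (measurable_pi_apply i).abs measurable_const
  have hvol : volume S ≤ ENNReal.ofReal (2 * t) * 2 ^ n := by
    rw [hSA, (EuclideanSpace.volume_preserving_symm_measurableEquiv_toLp (Fin n)).measure_preimage
      hA.nullMeasurableSet]
    exact shear_vol j k hjk ε t ht
  exact mul_le_mul_right ((measure_mono hsub).trans hvol) _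

lemma pdelta_zero (n : ℕ) (hn : 3 ≤ n) (x : E n) :
    pdelta n hn 0 x = (x ⟨n - 2, by omega⟩) ^ 2 - (x ⟨n - 1, by omega⟩) ^ 2 := by
  simp [pdelta]

lemma pdelta_diff (n : ℕ) (hn : 3 ≤ n) (δ : EuclideanSpace ℝ (Fin (n - 2))) (x : E n)
    (hx : ‖x‖ = 1) :
    |pdelta n hn δ x - pdelta n hn 0 x| ≤ 2 * n * ‖δ‖ := by
  have hcoord : ∀ i : Fin n, (x i) ^ 2 ≤ 1 := by
    intro i
    have h1 : |x i| ≤ 1 := (abs_coord_le_norm x i).trans hx.le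
    nlinarith [abs_nonneg (x i), sq_abs (x i)]
  have hδi : ∀ i : Fin (n - 2), |δ i| ≤ ‖δ‖ := fun i => abs_coord_le_norm δ i
  have hsum : ∑ i : Fin (n - 2), |δ i| ≤ (n : ℝ) * ‖δ‖ := by
    calc ∑ i : Fin (n - 2), |δ i| ≤ ∑ _i : Fin (n - 2), ‖δ‖ :=
          Finset.sum_le_sum fun i _ => hδi i
      _ = ((n - 2 : ℕ) : ℝ) * ‖δ‖ := by simp [Finset.sum_const, mul_comm]
      _ ≤ (n : ℝ) * ‖δ‖ :=
          mul_le_mul_of_nonneg_right (Nat.cast_le.2 (Nat.sub_le n 2)) (norm_nonneg δ)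
  have heq : pdelta n hn δ x - pdelta n hn 0 x
      = (∑ i : Fin (n - 2), δ i * (x ⟨(i : ℕ), lt_of_lt_of_le i.isLt (Nat.sub_le n 2)⟩) ^ 2)
        - (∑ i : Fin (n - 2), δ i) * (x ⟨n - 2, by omega⟩) ^ 2 := by
    rw [pdelta_zero]; simp [pdelta]; ring
  rw [heq]
  have h1 : |∑ i : Fin (n - 2), δ i * (x ⟨(i : ℕ), lt_of_lt_of_le i.isLt (Nat.sub_le n 2)⟩) ^ 2|
      ≤ ∑ i : Fin (n - 2), |δ i| := by
    refine (Finset.abs_sum_le_sum_abs _ _).trans (Finset.sum_le_sum fun i _ => ?_)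
    rw [abs_mul]
    have h2 : |(x ⟨(i : ℕ), lt_of_lt_of_le i.isLt (Nat.sub_le n 2)⟩) ^ 2|
        = (x ⟨(i : ℕ), lt_of_lt_of_le i.isLt (Nat.sub_le n 2)⟩) ^ 2 := abs_of_nonneg (sq_nonneg _)
    rw [h2]
    calc |δ i| * (x _) ^ 2 ≤ |δ i| * 1 :=
      mul_le_mul_of_nonneg_left (hcoord _) (abs_nonneg _)
    _ = |δ i| := mul_one _
  have h3 : |(∑ i : Fin (n - 2), δ i) * (x ⟨n - 2, by omega⟩) ^ 2|
      ≤ ∑ i : Fin (n - 2), |δ i| := by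
    rw [abs_mul, abs_of_nonneg (sq_nonneg (x ⟨n - 2, by omega⟩))]
    calc |∑ i : Fin (n - 2), δ i| * (x ⟨n - 2, by omega⟩) ^ 2
        ≤ |∑ i : Fin (n - 2), δ i| * 1 :=
          mul_le_mul_of_nonneg_left (hcoord _) (abs_nonneg _)
      _ = |∑ i : Fin (n - 2), δ i| := mul_one _
      _ ≤ ∑ i : Fin (n - 2), |δ i| := Finset.abs_sum_le_sum_abs _ _
  calc |_ - _| ≤ |∑ i : Fin (n - 2), δ i * (x ⟨(i : ℕ), lt_of_lt_of_le i.isLt (Nat.sub_le n 2)⟩) ^ 2|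
        + |(∑ i : Fin (n - 2), δ i) * (x ⟨n - 2, by omega⟩) ^ 2| := abs_sub _ _
    _ ≤ (n : ℝ) * ‖δ‖ + (n : ℝ) * ‖δ‖ := add_le_add (h1.trans hsum) (h3.trans hsum)
    _ = 2 * n * ‖δ‖ := by ring

lemma realcase (μ P t a b pd p0 : ℝ) (hμ0 : 0 < μ) (hμb : μ ≤ |b|)
    (hdiff : |pd - p0| ≤ P) (hp0 : p0 = a ^ 2 - b ^ 2)
    (hxor : Xor' (0 < pd) (0 < p0)) (htP : P / μ ≤ t) :
    |a - 1 * b| ≤ t ∨ |a - (-1) * b| ≤ t := by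
  have hP0 : 0 ≤ P := (abs_nonneg _).trans hdiff
  have habs := abs_le.1 hdiff
  have h0 : |a ^ 2 - b ^ 2| ≤ P := by
    rw [← hp0]
    rcases hxor with ⟨h1, h2⟩ | ⟨h1, h2⟩ <;> push_neg at h2 <;>
      exact abs_le.2 ⟨by linarith, by linarith⟩
  have hfac : |a - b| * |a + b| ≤ P := by
    rw [← abs_mul]
    have he : (a - b) * (a + b) = a ^ 2 - b ^ 2 := by ring
    rw [he]; exact h0
  have hone : μ ≤ |a - b| ∨ μ ≤ |a + b| := by
    by_contra hcon
    push_neg at hcon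
    have h2b : |2 * b| ≤ |a + b| + |a - b| := by
      have he : 2 * b = (a + b) - (a - b) := by ring
      rw [he]; exact abs_sub _ _
    rw [abs_mul, abs_two] at h2b
    linarith [hcon.1, hcon.2]
  rcases hone with hone | hone
  · right
    have he : a - (-1) * b = a + b := by ring
    rw [he]
    refine le_trans ?_ htP
    rw [le_div_iff₀ hμ0]
    calc |a + b| * μ ≤ |a + b| * |a - b| := mul_le_mul_of_nonneg_left hone (abs_nonneg _)
      _ = |a - b| * |a + b| := mul_comm _ _
      _ ≤ P := hfac
  · left
    have he : a - 1 * b = a - b := by ring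
    rw [he]
    refine le_trans ?_ htP
    rw [le_div_iff₀ hμ0]
    calc |a - b| * μ ≤ |a - b| * |a + b| := mul_le_mul_of_nonneg_left hone (abs_nonneg _)
      _ ≤ P := hfac


/-- Away from the degenerate zone `{|x_n| < μ}`, the symmetric difference
of `{p_δ > 0}` and `{p₀ > 0}` on the sphere has surface measure at most `C |δ| / μ`. -/
theorem statement11 (n : ℕ) (hn : 3 ≤ n) :
    ∃ C : ℝ, 0 < C ∧ ∃ κ₀ ∈ Set.Ioo (0 : ℝ) 1,
      ∀ μ ∈ Set.Ioo (0 : ℝ) (1/2),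
      ∀ δ : EuclideanSpace ℝ (Fin (n - 2)), ‖δ‖ ≤ κ₀ * μ →
        sphMeasure n {x : sphere (0 : E n) 1 |
            μ ≤ |(x : E n) ⟨n - 1, by omega⟩| ∧
            Xor' (0 < pdelta n hn δ (x : E n)) (0 < pdelta n hn 0 (x : E n))}
          ≤ ENNReal.ofReal (C * ‖δ‖ / μ) := by
  classical
  have hn0 : (0 : ℝ) < n := by positivity
  refine ⟨8 * n ^ 2 * 2 ^ n, by positivity, 1/2, ⟨by norm_num, by norm_num⟩, ?_⟩
  intro μ hμIoo δ hδ
  have hμ0 : 0 < μ := hμIoo.1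
  set j : Fin n := ⟨n - 2, by omega⟩ with hj
  set k : Fin n := ⟨n - 1, by omega⟩ with hk
  have hjk : j ≠ k := by
    simp only [hj, hk, Ne, Fin.mk.injEq]
    omega
  set t : ℝ := 2 * n * ‖δ‖ / μ with hT
  have ht0 : 0 ≤ t := by positivity
  -- containment
  have hcont : {x : sphere (0 : E n) 1 |
        μ ≤ |(x : E n) ⟨n - 1, by omega⟩| ∧
        Xor' (0 < pdelta n hn δ (x : E n)) (0 < pdelta n hn 0 (x : E n))}
      ⊆ {x : sphere (0 : E n) 1 | |(x : E n) j - 1 * (x : E n) k| ≤ t}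
        ∪ {x : sphere (0 : E n) 1 | |(x : E n) j - (-1) * (x : E n) k| ≤ t} := by
    rintro x ⟨hμx, hxor⟩
    have hxn : ‖(x : E n)‖ = 1 := mem_sphere_zero_iff_norm.mp x.2
    have hdiff : |pdelta n hn δ (x : E n) - pdelta n hn 0 (x : E n)| ≤ 2 * n * ‖δ‖ :=
      pdelta_diff n hn δ _ hxn
    have hμb : μ ≤ |(x : E n) k| := hμx
    have hp0 : pdelta n hn 0 (x : E n) = ((x : E n) j) ^ 2 - ((x : E n) k) ^ 2 :=
      pdelta_zero n hn _
    rcases realcase μ (2 * n * ‖δ‖) t ((x : E n) j) ((x : E n) k)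
        (pdelta n hn δ (x : E n)) (pdelta n hn 0 (x : E n)) hμ0 hμb hdiff hp0 hxor hT.ge
      with h | h
    · left; exact h
    · right; exact h
  -- measure bound
  have hb1 := slab_sphere j k hjk 1 t ht0
  have hb2 := slab_sphere j k hjk (-1) t ht0
  have hconv : (n : ℝ≥0∞) * (ENNReal.ofReal (2 * t) * 2 ^ n)
      = ENNReal.ofReal ((n : ℝ) * ((2 * t) * 2 ^ n)) := by
    rw [ENNReal.ofReal_mul (by positivity : (0:ℝ) ≤ (n:ℝ)),
      ENNReal.ofReal_mul (by positivity : (0:ℝ) ≤ 2 * t),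
      ENNReal.ofReal_pow (by norm_num : (0:ℝ) ≤ 2), ENNReal.ofReal_natCast,
      ENNReal.ofReal_ofNat]
  calc sphMeasure n {x : sphere (0 : E n) 1 |
        μ ≤ |(x : E n) ⟨n - 1, by omega⟩| ∧
        Xor' (0 < pdelta n hn δ (x : E n)) (0 < pdelta n hn 0 (x : E n))}
      ≤ sphMeasure n ({x : sphere (0 : E n) 1 | |(x : E n) j - 1 * (x : E n) k| ≤ t}
        ∪ {x : sphere (0 : E n) 1 | |(x : E n) j - (-1) * (x : E n) k| ≤ t}) :=
        measure_mono hcont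
    _ ≤ sphMeasure n {x : sphere (0 : E n) 1 | |(x : E n) j - 1 * (x : E n) k| ≤ t}
        + sphMeasure n {x : sphere (0 : E n) 1 | |(x : E n) j - (-1) * (x : E n) k| ≤ t} :=
        measure_union_le _ _
    _ ≤ ENNReal.ofReal ((n : ℝ) * ((2 * t) * 2 ^ n))
        + ENNReal.ofReal ((n : ℝ) * ((2 * t) * 2 ^ n)) := by
        rw [← hconv]
        exact add_le_add (hb1.trans_eq rfl) (hb2.trans_eq rfl)
    _ = ENNReal.ofReal ((n : ℝ) * ((2 * t) * 2 ^ n) + (n : ℝ) * ((2 * t) * 2 ^ n)) :=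
        (ENNReal.ofReal_add (by positivity) (by positivity)).symm
    _ = ENNReal.ofReal (8 * n ^ 2 * 2 ^ n * ‖δ‖ / μ) := by
        congr 1
        rw [hT]
        field_simp
        ring
end
end
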